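/- For any triangle, the Mittenpunkt X₉ satisfies X₉ = ((−ρ−2) X₁ + 6 X₂ + 2ρ X₃)/(ρ + 4), where ρ = r/R is the inradius-to-circumradius ratio, X₁ the incenter, X₂ the barycenter, and X₃ the circumcenter. -/

import Mathlib

/-!
In barycentric coordinates `X₁ = (a : b : c)`, `X₂ = (1 : 1 : 1)`,
`X₃ = (a²(b² + c² - a²) : b²(c² + a² - b²) : c²(a² + b² - c²))` and
`X₉ = (a(b + c - a) : b(c + a - b) : c(a + b - c))`, while
`ρ = (b + c - a)(c + a - b)(a + b - c) / (2abc)` by `r = 2Δ / (a + b + c)`, `R = abc / (4Δ)`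
and Heron's formula. The claim is then an identity between rational functions of `a, b, c`.

In the complex plane, `2iT = u conj v - conj u v` with `u = B - A`, `v = C - A` and `T = ±2Δ`;
eliminating `conj X₃` from `|X₃ - A| = |X₃ - B| = |X₃ - C|` gives
`2iT (X₃ - A) = u v conj (v - u)`, from which both `R` and the barycentrics of `X₃` are read
off.
-/

open Complex ComplexConjugate

theorem ofReal_sq_eq_mul_conj {a : ℝ} {z : ℂ} (ha : a = ‖z‖) :
    (a : ℂ) ^ 2 = z * conj z := by
  rw [ha, mul_conj']

theorem mul_conj_sub_conj_mul (u v : ℂ) :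
    u * conj v - conj u * v = (2 * (u * conj v).im : ℝ) * I := by
  simpa using sub_conj (u * conj v)

theorem circumcenter_sub_mul {A B C X : ℂ} (hB : ‖X - B‖ = ‖X - A‖)
    (hC : ‖X - C‖ = ‖X - A‖) :
    (X - A) * ((B - A) * conj (C - A) - conj (B - A) * (C - A)) =
      (B - A) * (C - A) * conj (C - B) := by
  have eB : (X - B) * conj (X - B) = (X - A) * conj (X - A) := by rw [mul_conj', mul_conj', hB]
  have eC : (X - C) * conj (X - C) = (X - A) * conj (X - A) := by rw [mul_conj', mul_conj', hC]
  simp only [map_sub] at eB eC ⊢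
  linear_combination (C - A) * eB - (B - A) * eC

theorem two_mul_abs_im_mul_norm_sub {A B C X : ℂ} (hB : ‖X - B‖ = ‖X - A‖)
    (hC : ‖X - C‖ = ‖X - A‖) :
    2 * |((B - A) * conj (C - A)).im| * ‖X - A‖ = ‖B - C‖ * ‖C - A‖ * ‖A - B‖ := by
  have h := congrArg norm (circumcenter_sub_mul hB hC)
  rw [mul_conj_sub_conj_mul] at h
  simp only [norm_mul, Complex.norm_real, norm_I, Complex.norm_conj, Real.norm_eq_abs,
    abs_two, mul_one] at h
  rw [norm_sub_rev C B, norm_sub_rev B A] at h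
  linear_combination h

theorem four_mul_sq_im_mul_conj_eq {A B C : ℂ} {a b c : ℝ} (ha : a = ‖B - C‖)
    (hb : b = ‖C - A‖) (hc : c = ‖A - B‖) :
    4 * ((B - A) * conj (C - A)).im ^ 2 =
      (a + b + c) * (b + c - a) * (c + a - b) * (a + b - c) := by
  rw [show (a + b + c) * (b + c - a) * (c + a - b) * (a + b - c) =
    4 * b ^ 2 * c ^ 2 - (b ^ 2 + c ^ 2 - a ^ 2) ^ 2 by ring]
  have hT := mul_conj_sub_conj_mul (B - A) (C - A)
  set T := ((B - A) * conj (C - A)).im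
  apply ofReal_injective
  push_cast at hT ⊢
  rw [ofReal_sq_eq_mul_conj ha, ofReal_sq_eq_mul_conj hb, ofReal_sq_eq_mul_conj hc]
  simp only [map_sub] at hT ⊢
  linear_combination congrArg (· ^ 2) hT + 4 * (T : ℂ) ^ 2 * I_sq

theorem circumcenter_barycentric {A B C X : ℂ} {a b c : ℝ} (ha : a = ‖B - C‖)
    (hb : b = ‖C - A‖) (hc : c = ‖A - B‖) (hB : ‖X - B‖ = ‖X - A‖)
    (hC : ‖X - C‖ = ‖X - A‖) :
    (4 * ((B - A) * conj (C - A)).im ^ 2) • X =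
      (a ^ 2 * (b ^ 2 + c ^ 2 - a ^ 2)) • A + (b ^ 2 * (c ^ 2 + a ^ 2 - b ^ 2)) • B
        + (c ^ 2 * (a ^ 2 + b ^ 2 - c ^ 2)) • C := by
  have hT := mul_conj_sub_conj_mul (B - A) (C - A)
  have hX := circumcenter_sub_mul hB hC
  set T := ((B - A) * conj (C - A)).im
  simp only [real_smul]
  push_cast at hT ⊢
  rw [ofReal_sq_eq_mul_conj ha, ofReal_sq_eq_mul_conj hb, ofReal_sq_eq_mul_conj hc]
  simp only [map_sub] at hT hX ⊢
  linear_combination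
    (2 * T * I + ((B - A) * (conj C - conj A) - (conj B - conj A) * (C - A))) * X * hT
      - ((B - A) * (conj C - conj A) - (conj B - conj A) * (C - A)) * hX
      + 4 * (T : ℂ) ^ 2 * X * I_sq

theorem sub_pos_of_im_mul_conj_ne_zero {A B C : ℂ} {a b c : ℝ} (ha : a = ‖B - C‖)
    (hb : b = ‖C - A‖) (hc : c = ‖A - B‖) (hT : ((B - A) * conj (C - A)).im ≠ 0) :
    0 < b + c - a ∧ 0 < c + a - b ∧ 0 < a + b - c := by
  have hprod : (a + b + c) * (b + c - a) * (c + a - b) * (a + b - c) ≠ 0 := by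
    rw [← four_mul_sq_im_mul_conj_eq ha hb hc]
    positivity
  simp only [mul_ne_zero_iff] at hprod
  obtain ⟨⟨⟨-, hx⟩, hy⟩, hz⟩ := hprod
  subst ha hb hc
  refine ⟨lt_of_le_of_ne ?_ hx.symm, lt_of_le_of_ne ?_ hy.symm, lt_of_le_of_ne ?_ hz.symm⟩ <;>
    linarith [norm_sub_le_norm_sub_add_norm_sub B A C, norm_sub_le_norm_sub_add_norm_sub C B A,
      norm_sub_le_norm_sub_add_norm_sub A C B, norm_sub_rev A B, norm_sub_rev B C, norm_sub_rev C A]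

theorem inradius_div_circumradius_eq {a b c T R : ℝ} (hx : 0 < b + c - a) (hy : 0 < c + a - b)
    (hz : 0 < a + b - c) (hR : 2 * |T| * R = a * b * c)
    (hT : 4 * T ^ 2 = (a + b + c) * (b + c - a) * (c + a - b) * (a + b - c)) :
    |T| / (a + b + c) / R = (b + c - a) * (c + a - b) * (a + b - c) / (2 * a * b * c) := by
  have ha : 0 < a := by linarith
  have hb : 0 < b := by linarith
  have hc : 0 < c := by linarith
  have hR0 : R ≠ 0 := right_ne_zero_of_mul (hR.trans_ne (by positivity))
  rw [div_div, div_eq_div_iff (by positivity) (by positivity)]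
  linear_combination (-2 * |T|) * hR + R * hT + 4 * R * sq_abs T

theorem mittenpunkt_eq_affineCombination {V : Type*} [AddCommGroup V] [Module ℝ V]
    {a b c ρ : ℝ} {A B C X₁ X₂ X₃ X₉ : V}
    (hx : 0 < b + c - a) (hy : 0 < c + a - b) (hz : 0 < a + b - c)
    (hρ : ρ = (b + c - a) * (c + a - b) * (a + b - c) / (2 * a * b * c))
    (hX₁ : X₁ = (a + b + c)⁻¹ • (a • A + b • B + c • C))
    (hX₂ : X₂ = (3 : ℝ)⁻¹ • (A + B + C))
    (hX₃ : X₃ = ((a + b + c) * (b + c - a) * (c + a - b) * (a + b - c))⁻¹ •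
      ((a ^ 2 * (b ^ 2 + c ^ 2 - a ^ 2)) • A + (b ^ 2 * (c ^ 2 + a ^ 2 - b ^ 2)) • B
        + (c ^ 2 * (a ^ 2 + b ^ 2 - c ^ 2)) • C))
    (hX₉ : X₉ = (a * (b + c - a) + b * (c + a - b) + c * (a + b - c))⁻¹ •
      ((a * (b + c - a)) • A + (b * (c + a - b)) • B + (c * (a + b - c)) • C)) :
    (ρ + 4) • X₉ = (-ρ - 2) • X₁ + (6 : ℝ) • X₂ + (2 * ρ) • X₃ := by
  have ha : 0 < a := by linarith
  have hb : 0 < b := by linarith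
  have hc : 0 < c := by linarith
  have hD : 0 < a * (b + c - a) + b * (c + a - b) + c * (a + b - c) := by positivity
  subst hρ hX₁ hX₂ hX₃ hX₉
  match_scalars <;> field_simp <;> ring

/-- For any nondegenerate triangle, with `ρ = r/R`, the Mittenpunkt satisfies
`X₉ = ((−ρ−2) X₁ + 6 X₂ + 2ρ X₃)/(ρ+4)`, an affine combination
of the barycenter, circumcenter, and Mittenpunkt. -/
theorem stmt8 (A B C X₃ : ℂ) (a b c r R ρ : ℝ)
    (ha : a = ‖B - C‖) (hb : b = ‖C - A‖)
    (hc : c = ‖A - B‖)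
    (hnd : ((B - A) * (starRingEnd ℂ) (C - A)).im ≠ 0)
    (hRA : ‖X₃ - A‖ = R) (hRB : ‖X₃ - B‖ = R)
    (hRC : ‖X₃ - C‖ = R)
    (hr : r = |((B - A) * (starRingEnd ℂ) (C - A)).im| / (a + b + c))
    (hρ : ρ = r / R)
    (X₁ X₂ X₉ : ℂ)
    (hX₁ : X₁ = (a / (a + b + c)) • A + (b / (a + b + c)) • B + (c / (a + b + c)) • C)
    (hX₂ : X₂ = (A + B + C) / 3)
    (hX₉ : X₉ = ((a * (b + c - a)) • A + (b * (c + a - b)) • B + (c * (a + b - c)) • C)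
        / ((a * (b + c - a) + b * (c + a - b) + c * (a + b - c) : ℝ) : ℂ)) :
    X₉ = ((-ρ - 2) • X₁ + (6:ℝ) • X₂ + (2 * ρ) • X₃) / ((ρ + 4 : ℝ) : ℂ) := by
  have hB : ‖X₃ - B‖ = ‖X₃ - A‖ := hRB.trans hRA.symm
  have hC : ‖X₃ - C‖ = ‖X₃ - A‖ := hRC.trans hRA.symm
  have heron := four_mul_sq_im_mul_conj_eq ha hb hc
  obtain ⟨hx, hy, hz⟩ := sub_pos_of_im_mul_conj_ne_zero ha hb hc hnd
  have hρ_nonneg : 0 ≤ ρ := by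
    rw [hρ, hr, ← hRA, ha, hb, hc]
    positivity
  have hR : 2 * |((B - A) * conj (C - A)).im| * R = a * b * c := by
    rw [← hRA, ha, hb, hc]
    exact two_mul_abs_im_mul_norm_sub hB hC
  have hρ_eq : ρ = (b + c - a) * (c + a - b) * (a + b - c) / (2 * a * b * c) := by
    rw [hρ, hr]
    exact inradius_div_circumradius_eq hx hy hz hR heron
  rw [eq_div_iff (ofReal_ne_zero.mpr (by linarith)), mul_comm, ← real_smul]
  refine mittenpunkt_eq_affineCombination (A := A) (B := B) (C := C) hx hy hz hρ_eq
    (by rw [hX₁]; module) (by rw [hX₂, real_smul]; push_cast; ring) ?_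
    (by rw [hX₉, div_eq_inv_mul, ← ofReal_inv]; exact real_smul.symm)
  rw [← heron, eq_inv_smul_iff₀ (by positivity)]
  exact circumcenter_barycentric ha hb hc hB hC
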